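/- Let ℝ carry an o-minimal structure in which the circle S¹ = ℝ/ℤ and rotations are definable, and let R ⊋ ℝ be a real closed field with an o-minimal structure conservatively extending that of ℝ. For irrational ε ∈ ℝ, the rotation ρ_ε(t) = t + ε of S¹_R = R/ℤ is structurally stable among definable homeomorphisms: every homeomorphism ρ of R/ℤ with ρ − ρ_ε taking values in the set A = {t ∈ R : nt < 1 for all n ∈ ℤ} of infinitesimals is topologically conjugate to ρ_ε, i.e., there is a (not necessarily definable) homeomorphism π of R/ℤ with π ∘ ρ_ε = ρ ∘ π. -/

import Mathlib

open Set

namespace OMin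

variable {R : Type*} [Field R] [LinearOrder R] [IsStrictOrderedRing R]

/-- `R` is a real closed field: nonnegative elements are squares and every polynomial of odd
degree has a root. -/
def IsRealClosed (R : Type*) [Field R] [LinearOrder R] [IsStrictOrderedRing R] : Prop :=
  (∀ x : R, 0 ≤ x → ∃ y, y ^ 2 = x) ∧
    ∀ p : Polynomial R, Odd p.natDegree → ∃ x, Polynomial.eval x p = 0

/-- A simplex in `R^n`: the convex hull of affinely independent points. -/
def IsSimplex {n : ℕ} (σ : Set (Fin n → R)) : Prop :=
  ∃ (k : ℕ) (v : Fin (k + 1) → Fin n → R),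
    AffineIndependent R v ∧ σ = convexHull R (Set.range v)

/-- A compact polyhedron in `R^n`: a finite union of simplexes. -/
def IsCompactPolyhedron {n : ℕ} (X : Set (Fin n → R)) : Prop :=
  ∃ F : Finset (Set (Fin n → R)), (∀ σ ∈ F, IsSimplex σ) ∧ X = ⋃₀ ↑F

/-- `f` is piecewise linear on `X`: `X` is a finite union of simplexes on each of which `f`
is affine. -/
def IsPLOn {n : ℕ} {V : Type*} [AddCommGroup V] [Module R V]
    (f : (Fin n → R) → V) (X : Set (Fin n → R)) : Prop :=
  ∃ F : Finset (Set (Fin n → R)), (∀ σ ∈ F, IsSimplex σ) ∧ X = ⋃₀ ↑F ∧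
    ∀ σ ∈ F, ∃ g : (Fin n → R) →ᵃ[R] V, Set.EqOn f (⇑g) σ

/-- A PL homeomorphism from `X` onto `Y`: a PL bijection with PL inverse. -/
def PLHomeoOn {n m : ℕ} (f : (Fin n → R) → (Fin m → R))
    (X : Set (Fin n → R)) (Y : Set (Fin m → R)) : Prop :=
  Set.BijOn f X Y ∧ IsPLOn f X ∧
    ∃ g : (Fin m → R) → (Fin n → R), IsPLOn g Y ∧ Set.InvOn g f X Y

/-- Bounded subset of `R^n`. -/
def IsBoundedSet {n : ℕ} (X : Set (Fin n → R)) : Prop :=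
  ∃ M : R, ∀ x ∈ X, ∀ i, |x i| ≤ M

/-- The product `X × J ⊆ R^{n+1}`, encoded via `Fin.snoc`. -/
def prodI {n : ℕ} (X : Set (Fin n → R)) (J : Set R) : Set (Fin (n + 1) → R) :=
  {z | ∃ x ∈ X, ∃ t ∈ J, z = Fin.snoc x t}

/-- The product `U × W ⊆ R^{n+k}`, encoded via `Fin.append`. -/
def appendProd {n k : ℕ} (U : Set (Fin n → R)) (W : Set (Fin k → R)) :
    Set (Fin (n + k) → R) :=
  {z | ∃ x ∈ U, ∃ v ∈ W, z = Fin.append x v}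

/-- An o-minimal structure on an ordered field `R` expanding `(R,<,0,1,+,·)`:
a collection of "definable" subsets of the spaces `R^n`, closed under boolean operations and
projection, containing all sets defined by polynomial equations and inequalities, and such
that every definable subset of `R` is a finite union of points and open intervals. -/
structure Str (R : Type*) [Field R] [LinearOrder R] [IsStrictOrderedRing R] where
  Defn : ∀ {n : ℕ}, Set (Fin n → R) → Prop
  defn_union : ∀ {n : ℕ} {A B : Set (Fin n → R)}, Defn A → Defn B → Defn (A ∪ B)
  defn_compl : ∀ {n : ℕ} {A : Set (Fin n → R)}, Defn A → Defn Aᶜ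
  defn_proj : ∀ {n : ℕ} {A : Set (Fin (n + 1) → R)}, Defn A →
    Defn {x : Fin n → R | ∃ t : R, Fin.snoc x t ∈ A}
  defn_polyZero : ∀ {n : ℕ} (p : MvPolynomial (Fin n) R),
    Defn {x : Fin n → R | MvPolynomial.eval x p = 0}
  defn_polyPos : ∀ {n : ℕ} (p : MvPolynomial (Fin n) R),
    Defn {x : Fin n → R | 0 < MvPolynomial.eval x p}
  tame : ∀ A : Set (Fin 1 → R), Defn A →
    ∃ P : Finset (Set R), {t : R | (fun _ => t) ∈ A} = ⋃₀ ↑P ∧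
      ∀ J ∈ P, (∃ a, J = {a}) ∨
        (J.OrdConnected ∧ (∀ a ∈ J, ∃ b ∈ J, b < a) ∧ ∀ a ∈ J, ∃ b ∈ J, a < b)

/-- The graph of `f` restricted to `X` is definable. -/
def DefGraphOn (S : Str R) {n m : ℕ} (f : (Fin n → R) → (Fin m → R))
    (X : Set (Fin n → R)) : Prop :=
  S.Defn {z : Fin (n + m) → R | ∃ x ∈ X, z = Fin.append x (f x)}

/-- The graph of a scalar-valued function `f` restricted to `X` is definable. -/
def DefGraphFunOn (S : Str R) {n : ℕ} (f : (Fin n → R) → R)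
    (X : Set (Fin n → R)) : Prop :=
  S.Defn {z : Fin (n + 1) → R | ∃ x ∈ X, z = Fin.snoc x (f x)}

section Top

variable [TopologicalSpace R]

/-- `f` restricts to a homeomorphism from `X` onto `Y`. -/
def HomeoOn {n m : ℕ} (f : (Fin n → R) → (Fin m → R))
    (X : Set (Fin n → R)) (Y : Set (Fin m → R)) : Prop :=
  ContinuousOn f X ∧ Set.BijOn f X Y ∧
    ∃ g : (Fin m → R) → (Fin n → R), ContinuousOn g Y ∧ Set.InvOn g f X Y

/-- A definable homeomorphism from `X` onto `Y`. -/
def DefHomeoOn (S : Str R) {n m : ℕ} (f : (Fin n → R) → (Fin m → R))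
    (X : Set (Fin n → R)) (Y : Set (Fin m → R)) : Prop :=
  DefGraphOn S f X ∧ HomeoOn f X Y

/-- `A ⊆ R^n` has dimension `< d`: every projection of `A` onto at least `d` of the
coordinates has empty interior. -/
def DimLT {n : ℕ} (A : Set (Fin n → R)) (d : ℕ) : Prop :=
  ∀ s : Finset (Fin n), d ≤ s.card →
    interior ((fun (x : Fin n → R) (i : s) => x (i : Fin n)) '' A) = ∅

/-- `A` has dimension exactly `d`. -/
def DimEq {n : ℕ} (A : Set (Fin n → R)) (d : ℕ) : Prop :=
  DimLT A (d + 1) ∧ ¬ DimLT A d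

/-- A definable isotopy through homeomorphisms from `X` to `Y`:
a definable continuous map `F : X × [0,1] → Y` each of whose slices `F(·,t)`
is a homeomorphism from `X` onto `Y`. -/
def DefIsotopyThroughHomeos (S : Str R) {n m : ℕ}
    (F : (Fin (n + 1) → R) → (Fin m → R))
    (X : Set (Fin n → R)) (Y : Set (Fin m → R)) : Prop :=
  DefGraphOn S F (prodI X (Icc 0 1)) ∧ ContinuousOn F (prodI X (Icc 0 1)) ∧
    ∀ t ∈ Icc (0 : R) 1, HomeoOn (fun x => F (Fin.snoc x t)) X Y

end Top

/-- A basic semi-linear set: the solution set of finitely many affine (weak or strict)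
inequalities. -/
def IsBasicSemiLinear {n : ℕ} (A : Set (Fin n → R)) : Prop :=
  ∃ (k : ℕ) (g : Fin k → ((Fin n → R) →ᵃ[R] R)) (strict : Fin k → Bool),
    A = {x | ∀ i, if strict i then 0 < g i x else 0 ≤ g i x}

/-- A semi-linear set: a finite union of basic semi-linear sets. This is exactly a set
definable in the o-minimal structure `(R,<,0,+,(c·)_{c ∈ R})`. -/
def IsSemiLinear {n : ℕ} (A : Set (Fin n → R)) : Prop :=
  ∃ F : Finset (Set (Fin n → R)), (∀ B ∈ F, IsBasicSemiLinear B) ∧ A = ⋃₀ ↑F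

/-- The graph of `f` restricted to `X` is semi-linear. -/
def SLGraphOn {n m : ℕ} (f : (Fin n → R) → (Fin m → R)) (X : Set (Fin n → R)) : Prop :=
  IsSemiLinear {z : Fin (n + m) → R | ∃ x ∈ X, z = Fin.append x (f x)}

section Top2

variable [TopologicalSpace R]

/-- A semi-linear homeomorphism from `Y` onto `Z`. -/
def SLHomeoOn {n m : ℕ} (f : (Fin n → R) → (Fin m → R))
    (Y : Set (Fin n → R)) (Z : Set (Fin m → R)) : Prop :=
  SLGraphOn f Y ∧ HomeoOn f Y Z

/-- A standard family of semi-linear sets `(Y, Y_i)`: `Y` is bounded and semi-linear and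
every point of `cl Y − Y` has a semi-linear neighborhood `U` in `cl Y` such that
`(U, U ∩ Y, U ∩ Y_i)` is semi-linearly homeomorphic to
`(V × [0,1), V × (0,1), V_i × (0,1))` for some semi-linear sets `(V, V_i)` (a local collar). -/
def IsStandardFam {n k : ℕ} (Y : Set (Fin n → R)) (Yi : Fin k → Set (Fin n → R)) : Prop :=
  IsSemiLinear Y ∧ IsBoundedSet Y ∧ (∀ i, IsSemiLinear (Yi i) ∧ Yi i ⊆ Y) ∧
    ∀ x ∈ closure Y \ Y, ∃ U : Set (Fin n → R), IsSemiLinear U ∧ U ⊆ closure Y ∧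
      (∃ W, IsOpen W ∧ x ∈ W ∧ W ∩ closure Y ⊆ U) ∧
      ∃ (m : ℕ) (V : Set (Fin m → R)) (Vi : Fin k → Set (Fin m → R))
        (φ : (Fin (m + 1) → R) → (Fin n → R)),
        IsSemiLinear V ∧ (∀ i, IsSemiLinear (Vi i) ∧ Vi i ⊆ V) ∧
        SLHomeoOn φ (prodI V (Ico 0 1)) U ∧
        φ '' prodI V (Ioo 0 1) = U ∩ Y ∧
        ∀ i, φ '' prodI (Vi i) (Ioo 0 1) = U ∩ Yi i

end Top2

/-- The convex cell spanned by a finite set of points. -/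
def CellOf {n : ℕ} (V : Finset (Fin n → R)) : Set (Fin n → R) :=
  convexHull R ↑V

/-- A finite cell complex: a finite collection of (nonempty) convex cells, any two of which
meet along a common face (an extreme subset) belonging to the collection. -/
def IsCellComplex {n : ℕ} (C : Finset (Finset (Fin n → R))) : Prop :=
  (∀ V ∈ C, V.Nonempty) ∧
    ∀ V ∈ C, ∀ W ∈ C, CellOf V ∩ CellOf W = ∅ ∨
      ∃ U ∈ C, CellOf V ∩ CellOf W = CellOf U ∧
        IsExtreme R (CellOf V) (CellOf U) ∧ IsExtreme R (CellOf W) (CellOf U)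

/-- The underlying polyhedron of a cell complex. -/
def CplxSpace {n : ℕ} (C : Finset (Finset (Fin n → R))) : Set (Fin n → R) :=
  ⋃ V ∈ C, CellOf V

/-- A PL `d`-ball: a set PL homeomorphic to a `d`-simplex. -/
def IsPLBall {n : ℕ} (d : ℕ) (B : Set (Fin n → R)) : Prop :=
  ∃ (v : Fin (d + 1) → Fin d → R) (g : (Fin n → R) → (Fin d → R)),
    AffineIndependent R v ∧ PLHomeoOn g B (convexHull R (Set.range v))

section Top3

variable [TopologicalSpace R]

/-- A compact PL `d`-manifold with boundary: a compact polyhedron in which every point has a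
closed neighborhood that is a PL `d`-ball. -/
def IsPLManifoldWithBoundary {n : ℕ} (d : ℕ) (X : Set (Fin n → R)) : Prop :=
  IsCompactPolyhedron X ∧
    ∀ x ∈ X, ∃ N : Set (Fin n → R), N ⊆ X ∧ IsCompactPolyhedron N ∧
      (∃ U, IsOpen U ∧ x ∈ U ∧ U ∩ X ⊆ N) ∧ IsPLBall d N

/-- A (possibly noncompact) polyhedron: a locally finite union of simplexes. -/
def IsPolyhedron {n : ℕ} (X : Set (Fin n → R)) : Prop :=
  ∃ F : Set (Set (Fin n → R)), (∀ σ ∈ F, IsSimplex σ) ∧ X = ⋃₀ F ∧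
    ∀ x ∈ X, ∃ W, IsOpen W ∧ x ∈ W ∧ {σ | σ ∈ F ∧ (σ ∩ W).Nonempty}.Finite

/-- `f` is piecewise linear on the (possibly noncompact) polyhedron `X`. -/
def IsLocPLOn {n m : ℕ} (f : (Fin n → R) → (Fin m → R)) (X : Set (Fin n → R)) : Prop :=
  ∃ F : Set (Set (Fin n → R)), (∀ σ ∈ F, IsSimplex σ) ∧ X = ⋃₀ F ∧
    (∀ x ∈ X, ∃ W, IsOpen W ∧ x ∈ W ∧ {σ | σ ∈ F ∧ (σ ∩ W).Nonempty}.Finite) ∧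
    ∀ σ ∈ F, ∃ g : (Fin n → R) →ᵃ[R] (Fin m → R), Set.EqOn f (⇑g) σ

/-- A PL homeomorphism between possibly noncompact polyhedra. -/
def LocPLHomeoOn {n m : ℕ} (f : (Fin n → R) → (Fin m → R))
    (X : Set (Fin n → R)) (Y : Set (Fin m → R)) : Prop :=
  Set.BijOn f X Y ∧ IsLocPLOn f X ∧
    ∃ g : (Fin m → R) → (Fin n → R), IsLocPLOn g Y ∧ Set.InvOn g f X Y

end Top3

/-- Graph of `f` on `X`, as a subset of `R^{n+m}`. -/
def GraphOn {n m : ℕ} (f : (Fin n → R) → (Fin m → R)) (X : Set (Fin n → R)) :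
    Set (Fin (n + m) → R) :=
  {z | ∃ x ∈ X, z = Fin.append x (f x)}

/-- `XR ⊆ R^n` is the `R`-extension of the compact polyhedron `X ⊆ ℝ^n` along the order
embedding `ι : ℝ → R`: both are obtained from a common finite family of simplexes (given by
their affinely independent vertex sets), taking convex hulls over `ℝ` resp. over `R`. -/
def ExtendsPoly (ι : ℝ →+* R) {n : ℕ} (X : Set (Fin n → ℝ)) (XR : Set (Fin n → R)) : Prop :=
  ∃ 𝒱 : Finset (Finset (Fin n → ℝ)),
    (∀ V ∈ 𝒱, AffineIndependent ℝ (fun v : {x // x ∈ V} => (v : Fin n → ℝ))) ∧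
    X = ⋃ V ∈ 𝒱, convexHull ℝ (V : Set (Fin n → ℝ)) ∧
    XR = ⋃ V ∈ 𝒱, convexHull R
      ((fun (x : Fin n → ℝ) (i : Fin n) => ι (x i)) '' (V : Set (Fin n → ℝ)))

/-- `fR` (on `XR`) is the `R`-extension of the map `f` (on `X`): its graph extends the
graph of `f`. -/
def ExtendsMap (ι : ℝ →+* R) {n m : ℕ} (f : (Fin n → ℝ) → (Fin m → ℝ))
    (X : Set (Fin n → ℝ)) (fR : (Fin n → R) → (Fin m → R)) (XR : Set (Fin n → R)) : Prop :=
  ExtendsPoly ι (GraphOn f X) (GraphOn fR XR)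

/-- PL homotopy between maps `X → Y`. -/
def PLHomotopic {n m : ℕ} (f g : (Fin n → R) → (Fin m → R))
    (X : Set (Fin n → R)) (Y : Set (Fin m → R)) : Prop :=
  ∃ H : (Fin (n + 1) → R) → (Fin m → R),
    IsPLOn H (prodI X (Icc 0 1)) ∧ Set.MapsTo H (prodI X (Icc 0 1)) Y ∧
    (∀ x ∈ X, H (Fin.snoc x 0) = f x) ∧ ∀ x ∈ X, H (Fin.snoc x 1) = g x

/-- PL isotopy between embeddings `X → Y`: a PL homotopy each of whose slices is an
embedding. -/
def PLIsotopic {n m : ℕ} (f g : (Fin n → R) → (Fin m → R))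
    (X : Set (Fin n → R)) (Y : Set (Fin m → R)) : Prop :=
  ∃ H : (Fin (n + 1) → R) → (Fin m → R),
    IsPLOn H (prodI X (Icc 0 1)) ∧ Set.MapsTo H (prodI X (Icc 0 1)) Y ∧
    (∀ x ∈ X, H (Fin.snoc x 0) = f x) ∧ (∀ x ∈ X, H (Fin.snoc x 1) = g x) ∧
    ∀ t ∈ Icc (0 : R) 1, Set.InjOn (fun x => H (Fin.snoc x t)) X

/-- Ambient PL isotopy: the embeddings `f, g : X → Y` differ by a PL isotopy of `Y`
starting at the identity. -/
def AmbPLIsotopic {n m : ℕ} (f g : (Fin n → R) → (Fin m → R))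
    (X : Set (Fin n → R)) (Y : Set (Fin m → R)) : Prop :=
  ∃ G : (Fin (m + 1) → R) → (Fin m → R),
    IsPLOn G (prodI Y (Icc 0 1)) ∧ Set.MapsTo G (prodI Y (Icc 0 1)) Y ∧
    (∀ y ∈ Y, G (Fin.snoc y 0) = y) ∧
    (∀ t ∈ Icc (0 : R) 1, Set.BijOn (fun y => G (Fin.snoc y t)) Y Y) ∧
    ∀ x ∈ X, G (Fin.snoc (f x) 1) = g x

/-- A PL embedding of `X` into `Y`. -/
def PLEmbeddingOn {n m : ℕ} (f : (Fin n → R) → (Fin m → R))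
    (X : Set (Fin n → R)) (Y : Set (Fin m → R)) : Prop :=
  IsPLOn f X ∧ Set.MapsTo f X Y ∧ Set.InjOn f X

section Micro

variable [TopologicalSpace R]

/-- A definable microbundle `B → E → B` with fiber dimension `k`:
definable continuous maps `i : B → E` (zero section) and `j : E → B` (projection) with
`j ∘ i = id`, which is locally trivial in the definable category (Milnor's condition). -/
def IsDefMicrobundle (S : Str R) {n m : ℕ} (k : ℕ)
    (B : Set (Fin n → R)) (E : Set (Fin m → R))
    (i : (Fin n → R) → (Fin m → R)) (j : (Fin m → R) → (Fin n → R)) : Prop :=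
  S.Defn B ∧ S.Defn E ∧ DefGraphOn S i B ∧ DefGraphOn S j E ∧
  ContinuousOn i B ∧ ContinuousOn j E ∧ Set.MapsTo i B E ∧ Set.MapsTo j E B ∧
  (∀ b ∈ B, j (i b) = b) ∧
  ∀ b ∈ B, ∃ (U : Set (Fin n → R)) (V : Set (Fin m → R))
      (h : (Fin m → R) → (Fin (n + k) → R)),
    b ∈ U ∧ U ⊆ B ∧ (∃ W, IsOpen W ∧ U = W ∩ B) ∧
    i b ∈ V ∧ V ⊆ E ∧ (∃ W, IsOpen W ∧ V = W ∩ E) ∧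
    Set.MapsTo i U V ∧ Set.MapsTo j V U ∧
    DefGraphOn S h V ∧ HomeoOn h V (appendProd U (univ : Set (Fin k → R))) ∧
    (∀ x ∈ U, h (i x) = Fin.append x 0) ∧
    ∀ e ∈ V, ∀ idx : Fin n, h e (Fin.castAdd k idx) = j e idx

/-- A PL microbundle with fiber dimension `k` over a compact polyhedral base. -/
def IsPLMicrobundle {n m : ℕ} (k : ℕ)
    (B : Set (Fin n → R)) (E : Set (Fin m → R))
    (i : (Fin n → R) → (Fin m → R)) (j : (Fin m → R) → (Fin n → R)) : Prop :=
  IsCompactPolyhedron B ∧ IsPolyhedron E ∧ IsPLOn i B ∧ IsLocPLOn j E ∧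
  Set.MapsTo i B E ∧ Set.MapsTo j E B ∧
  (∀ b ∈ B, j (i b) = b) ∧
  ∀ b ∈ B, ∃ (U : Set (Fin n → R)) (V : Set (Fin m → R))
      (h : (Fin m → R) → (Fin (n + k) → R)),
    b ∈ U ∧ U ⊆ B ∧ (∃ W, IsOpen W ∧ U = W ∩ B) ∧
    i b ∈ V ∧ V ⊆ E ∧ (∃ W, IsOpen W ∧ V = W ∩ E) ∧
    Set.MapsTo i U V ∧ Set.MapsTo j V U ∧
    LocPLHomeoOn h V (appendProd U (univ : Set (Fin k → R))) ∧
    (∀ x ∈ U, h (i x) = Fin.append x 0) ∧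
    ∀ e ∈ V, ∀ idx : Fin n, h e (Fin.castAdd k idx) = j e idx

/-- Definable isomorphism of microbundles over the same base `B`: a definable homeomorphism
between neighborhoods of the zero sections commuting with the zero sections and the
projections (germ equivalence near the zero section). -/
def DefMicroIso (S : Str R) {n m₁ m₂ : ℕ} (B : Set (Fin n → R))
    (E₁ : Set (Fin m₁ → R)) (i₁ : (Fin n → R) → (Fin m₁ → R))
    (j₁ : (Fin m₁ → R) → (Fin n → R))
    (E₂ : Set (Fin m₂ → R)) (i₂ : (Fin n → R) → (Fin m₂ → R))
    (j₂ : (Fin m₂ → R) → (Fin n → R)) : Prop :=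
  ∃ (V₁ : Set (Fin m₁ → R)) (V₂ : Set (Fin m₂ → R))
    (h : (Fin m₁ → R) → (Fin m₂ → R)),
    V₁ ⊆ E₁ ∧ V₂ ⊆ E₂ ∧ i₁ '' B ⊆ V₁ ∧ i₂ '' B ⊆ V₂ ∧
    (∃ W, IsOpen W ∧ i₁ '' B ⊆ W ∧ W ∩ E₁ ⊆ V₁) ∧
    (∃ W, IsOpen W ∧ i₂ '' B ⊆ W ∧ W ∩ E₂ ⊆ V₂) ∧
    DefGraphOn S h V₁ ∧ HomeoOn h V₁ V₂ ∧
    (∀ b ∈ B, h (i₁ b) = i₂ b) ∧ ∀ e ∈ V₁, j₂ (h e) = j₁ e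

end Micro

end OMin

/-!
Since `R ⊋ ℝ`, the group `A` of infinitesimals contains a nonzero element, hence an interval
around `0`, so it is open; its image `Ā` in `R/ℤ` is an open subgroup, and since `ε` is
irrational, `m ε ∈ Ā` only for `m = 0`. Choosing a base point in each class of `R/ℤ` modulo
`Ā + ℤ ε` gives an index `μ : R/ℤ → ℤ` that is invariant under `Ā` and increases by one under
`ρ_ε`. Since `ρ` moves every point by `ε` modulo `Ā`, so does each `ρ^m` by `m ε`, and
`π x = ρ^{μ x} (x - μ x ε)` is the conjugacy; it is continuous since `μ` is locally constant.
-/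

section Conjugacy

variable {G : Type*} [AddCommGroup G]

theorem zpow_apply_sub_mem_of_forall_sub_mem [TopologicalSpace G] {A : AddSubgroup G} {e : G}
    {ρ : G ≃ₜ G} (hρ : ∀ x, ρ x - (x + e) ∈ A) (m : ℤ) (x : G) :
    (ρ ^ m) x - (x + m • e) ∈ A := by
  induction m using Int.induction_on generalizing x with
  | zero => simp
  | succ n ih =>
    have h := A.add_mem (hρ ((ρ ^ (n : ℤ)) x)) (ih x)
    rw [add_comm (n : ℤ) 1, zpow_one_add, Homeomorph.mul_apply, add_zsmul, one_zsmul]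
    convert h using 1
    abel
  | pred n ih =>
    have h := A.sub_mem (ih x) (hρ ((ρ ^ (-(n : ℤ) - 1)) x))
    rw [sub_zsmul, one_zsmul]
    convert h using 1
    rw [← Homeomorph.mul_apply, ← zpow_one_add, add_sub_cancel]
    abel

theorem exists_index_of_zsmul_mem (A : AddSubgroup G) {e : G}
    (hfree : ∀ m : ℤ, m • e ∈ A → m = 0) :
    ∃ μ : G → ℤ, (∀ x, ∀ a ∈ A, μ (x + a) = μ x) ∧ ∀ x, μ (x + e) = μ x + 1 := by
  classical
  set C := A ⊔ AddSubgroup.zmultiples e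
  let base : G → G := fun x => (x : G ⧸ C).out
  have hdec : ∀ x, ∃ m : ℤ, x - base x - m • e ∈ A := by
    intro x
    have hx : -base x + x ∈ C := QuotientAddGroup.eq.mp (QuotientAddGroup.out_eq' (x : G ⧸ C))
    obtain ⟨a, ha, _, ⟨m, rfl⟩, hsum⟩ := AddSubgroup.mem_sup.mp hx
    refine ⟨m, ?_⟩
    convert ha using 1
    rw [eq_sub_of_add_eq hsum]
    abel
  choose μ hμ using hdec
  have hμ_eq : ∀ x m, x - base x - m • e ∈ A → μ x = m := fun x m hm =>
    sub_eq_zero.mp <| hfree _ <| by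
      convert A.sub_mem hm (hμ x) using 1
      rw [sub_zsmul]; abel
  have hbase : ∀ x c, c ∈ C → base (x + c) = base x := fun x c hc => by
    have hxc : ((x + c : G) : G ⧸ C) = x :=
      QuotientAddGroup.eq_iff_sub_mem.mpr (by rwa [add_sub_cancel_left])
    simp only [base, hxc]
  refine ⟨μ, fun x a ha => hμ_eq _ _ ?_, fun x => hμ_eq _ _ ?_⟩
  · rw [hbase x a (AddSubgroup.mem_sup_left ha)]
    convert A.add_mem (hμ x) ha using 1
    abel
  · rw [hbase x e (AddSubgroup.mem_sup_right (AddSubgroup.mem_zmultiples e)), add_zsmul,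
      one_zsmul]
    convert hμ x using 1
    abel

variable [TopologicalSpace G] [IsTopologicalAddGroup G]

theorem isLocallyConstant_of_add_mem {A : AddSubgroup G} (hA : IsOpen (A : Set G))
    {Y : Type*} {f : G → Y} (hf : ∀ x, ∀ a ∈ A, f (x + a) = f x) : IsLocallyConstant f := by
  refine (IsLocallyConstant.iff_eventually_eq f).mpr fun x => ?_
  have hnhds : {y | y - x ∈ A} ∈ nhds x :=
    (hA.preimage (continuous_sub_right x)).mem_nhds (by simp)
  filter_upwards [hnhds] with y hy
  simpa using hf x _ hy

theorem exists_homeomorph_semiconj_add_of_sub_mem {A : AddSubgroup G}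
    (hA : IsOpen (A : Set G)) {e : G} (hfree : ∀ m : ℤ, m • e ∈ A → m = 0) (ρ : G ≃ₜ G)
    (hρ : ∀ x, ρ x - (x + e) ∈ A) :
    ∃ π : G ≃ₜ G, Function.Semiconj π (· + e) ρ := by
  obtain ⟨μ, hμA, hμe⟩ := exists_index_of_zsmul_mem A hfree
  have hiter := zpow_apply_sub_mem_of_forall_sub_mem hρ
  let π : G → G := fun x => (ρ ^ μ x) (x - μ x • e)
  let σ : G → G := fun y => (ρ ^ (-μ y)) y + μ y • e
  -- `π` and `σ` move points only within their `A`-coset, so they preserve `μ` and are inverse.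
  have hμπ : ∀ x, μ (π x) = μ x := fun x => by
    have hπx : π x - x ∈ A := by simpa using hiter (μ x) (x - μ x • e)
    rw [← hμA x _ hπx, add_sub_cancel]
  have hμσ : ∀ y, μ (σ y) = μ y := fun y => by
    have hσy : σ y - y ∈ A := by
      convert hiter (-μ y) y using 1
      simp only [σ, neg_zsmul]
      abel
    rw [← hμA y _ hσy, add_sub_cancel]
  have hcont : ∀ F : ℤ → G → G, (∀ m, Continuous (F m)) → Continuous fun x => F (μ x) x :=
    fun F hF => (continuous_prod_of_discrete_left (f := Function.uncurry F) |>.mpr hF).comp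
      ((isLocallyConstant_of_add_mem hA hμA).continuous.prodMk continuous_id)
  refine ⟨
    { toFun := π
      invFun := σ
      left_inv := fun x => by
        change (ρ ^ (-μ (π x))) (π x) + μ (π x) • e = x
        rw [hμπ, ← Homeomorph.mul_apply, ← zpow_add, neg_add_cancel, zpow_zero,
          Homeomorph.one_apply, sub_add_cancel]
      right_inv := fun y => by
        change (ρ ^ μ (σ y)) (σ y - μ (σ y) • e) = y
        rw [hμσ, add_sub_cancel_right, ← Homeomorph.mul_apply, ← zpow_add, add_neg_cancel,
          zpow_zero, Homeomorph.one_apply]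
      continuous_toFun := hcont (fun m x => (ρ ^ m) (x - m • e))
        fun m => (ρ ^ m).continuous.comp (continuous_sub_right _)
      continuous_invFun := hcont (fun m y => (ρ ^ (-m)) y + m • e)
        fun m => (ρ ^ (-m)).continuous.add continuous_const }, fun x => ?_⟩
  change (ρ ^ μ (x + e)) (x + e - μ (x + e) • e) = ρ ((ρ ^ μ x) (x - μ x • e))
  rw [hμe, add_comm (μ x), zpow_one_add, Homeomorph.mul_apply, add_zsmul, one_zsmul, add_comm e,
    add_sub_add_right_eq_sub]

end Conjugacy

theorem map_abs_of_monotone {α β F : Type*} [AddGroup α] [LinearOrder α] [AddGroup β]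
    [LinearOrder β] [FunLike F α β] [AddMonoidHomClass F α β] {f : F} (hf : Monotone f) (x : α) :
    f |x| = |f x| := by
  rw [abs_eq_max_neg, abs_eq_max_neg, hf.map_max, map_neg]

section Infinitesimals

variable {R : Type*} [Field R] [LinearOrder R] [IsStrictOrderedRing R]

variable (R) in
def infinitesimals : AddSubgroup R where
  carrier := {t : R | ∀ z : ℤ, |z • t| < 1}
  zero_mem' := by simp
  add_mem' {a b} ha hb z := by
    have h2a := ha (2 * z)
    have h2b := hb (2 * z)
    rw [mul_zsmul, abs_zsmul, abs_two, two_zsmul, ← two_mul] at h2a h2b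
    rw [smul_add]
    linarith [abs_add_le (z • a) (z • b)]
  neg_mem' {a} ha z := by rw [smul_neg, abs_neg]; exact ha z

theorem mem_infinitesimals_of_abs_le {s t : R} (ht : t ∈ infinitesimals R) (h : |s| ≤ |t|) :
    s ∈ infinitesimals R := fun z =>
  calc |z • s| = |(z : R)| * |s| := by rw [zsmul_eq_mul, abs_mul]
    _ ≤ |(z : R)| * |t| := mul_le_mul_of_nonneg_left h (abs_nonneg _)
    _ = |z • t| := by rw [zsmul_eq_mul, abs_mul]
    _ < 1 := ht z

theorem isOpen_infinitesimals [TopologicalSpace R] [OrderTopology R] {δ : R}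
    (hδ : δ ∈ infinitesimals R) (hδ0 : δ ≠ 0) : IsOpen (infinitesimals R : Set R) := by
  have hpos : 0 < |δ| := abs_pos.mpr hδ0
  refine AddSubgroup.isOpen_of_mem_nhds _ (g := 0) ?_
  filter_upwards [Ioo_mem_nhds (neg_lt_zero.mpr hpos) hpos] with s hs
  exact mem_infinitesimals_of_abs_le hδ (abs_lt.mpr hs).le

variable {ι : ℝ →+* R}

theorem mem_infinitesimals_of_forall_abs_lt {t : R} (h : ∀ q : ℝ, 0 < q → |t| < ι q) :
    t ∈ infinitesimals R := by
  intro z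
  rcases eq_or_ne z 0 with rfl | hz
  · simp
  have hz' : (0 : ℝ) < |(z : ℝ)| := abs_pos.mpr (Int.cast_ne_zero.mpr hz)
  calc |z • t| = ι |(z : ℝ)| * |t| := by
        rw [zsmul_eq_mul, abs_mul, ← Int.cast_abs, ← Int.cast_abs, map_intCast]
    _ < ι |(z : ℝ)| * ι |(z : ℝ)|⁻¹ := by
        refine mul_lt_mul_of_pos_left (h _ (inv_pos.mpr hz')) ?_
        rw [← Int.cast_abs, map_intCast]
        exact_mod_cast abs_pos.mpr hz
    _ = 1 := by rw [← map_mul, mul_inv_cancel₀ hz'.ne', map_one]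

theorem eq_zero_of_map_mem_infinitesimals (hι : Monotone ι) {s : ℝ}
    (hs : ι s ∈ infinitesimals R) : s = 0 := by
  by_contra hs0
  obtain ⟨n, hn⟩ := exists_nat_gt |s|⁻¹
  have hlt : ι |(n : ℝ) * s| < ι 1 := by
    simpa [zsmul_eq_mul, map_abs_of_monotone hι] using hs n
  have h1 : 1 < |(n : ℝ) * s| := by
    rw [abs_mul, Nat.abs_cast]
    exact (inv_lt_iff_one_lt_mul₀ (abs_pos.mpr hs0)).mp hn
  exact hlt.not_ge (hι h1.le)

-- The witness is the standard part of `r`: the supremum of the reals below it.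
theorem exists_forall_abs_sub_lt_of_abs_le (hι : StrictMono ι) {r : R} {M : ℝ}
    (hM : |r| ≤ ι M) : ∃ c : ℝ, ∀ q : ℝ, 0 < q → |r - ι c| < ι q := by
  set S := {q : ℝ | ι q < r}
  have hne : S.Nonempty := ⟨-(M + 1), by
    have := hι (lt_add_one M)
    show ι (-(M + 1)) < r
    rw [map_neg]
    linarith [neg_abs_le r]⟩
  have hbdd : BddAbove S := ⟨M, fun q hq =>
    (hι.lt_iff_lt.mp ((show ι q < r from hq).trans_le ((le_abs_self r).trans hM))).le⟩
  refine ⟨sSup S, fun q hq => abs_sub_lt_iff.mpr ⟨?_, ?_⟩⟩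
  · by_contra! h
    have hmem : sSup S + q / 2 ∈ S := by
      have := hι (half_lt_self hq)
      show ι (sSup S + q / 2) < r
      rw [map_add]
      linarith
    linarith [le_csSup hbdd hmem]
  · by_contra! h
    have hub : ∀ p ∈ S, p ≤ sSup S - q := fun p hp =>
      (hι.lt_iff_lt.mp (by rw [map_sub]; linarith [show ι p < r from hp])).le
    linarith [csSup_le hne hub]

theorem exists_mem_infinitesimals_ne_zero (hι : StrictMono ι)
    (hproper : ∃ r : R, r ∉ Set.range ι) : ∃ δ ∈ infinitesimals R, δ ≠ 0 := by
  obtain ⟨r, hr⟩ := hproper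
  by_cases hbd : ∃ M : ℝ, |r| ≤ ι M
  · obtain ⟨M, hM⟩ := hbd
    obtain ⟨c, hc⟩ := exists_forall_abs_sub_lt_of_abs_le hι hM
    exact ⟨r - ι c, mem_infinitesimals_of_forall_abs_lt hc,
      sub_ne_zero.mpr fun h => hr ⟨c, h.symm⟩⟩
  · simp only [not_exists, not_le] at hbd
    have hr0 : 0 < |r| := by simpa using hbd 0
    refine ⟨r⁻¹, mem_infinitesimals_of_forall_abs_lt (ι := ι) fun q hq => ?_,
      inv_ne_zero (abs_pos.mp hr0)⟩
    have hq' : 0 < ι q⁻¹ := map_zero ι ▸ hι (inv_pos.mpr hq)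
    calc |r⁻¹| = |r|⁻¹ := abs_inv r
      _ < (ι q⁻¹)⁻¹ := inv_strictAnti₀ hq' (hbd q⁻¹)
      _ = ι q := by rw [map_inv₀, inv_inv]

theorem eq_zero_of_zsmul_mk_mem_map_infinitesimals (hι : Monotone ι) {ε : ℝ}
    (hε : Irrational ε) {m : ℤ}
    (hm : m • (QuotientAddGroup.mk (ι ε) : R ⧸ AddSubgroup.zmultiples (1 : R)) ∈
      (infinitesimals R).map (QuotientAddGroup.mk' _)) : m = 0 := by
  obtain ⟨a, ha, hamk⟩ := hm
  have hint : a - m • ι ε ∈ AddSubgroup.zmultiples (1 : R) :=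
    QuotientAddGroup.eq_iff_sub_mem.mp (by simpa using hamk)
  obtain ⟨k, hk⟩ := AddSubgroup.mem_zmultiples_iff.mp hint
  have ha' : a = ι (m * ε + k) := by
    rw [zsmul_eq_mul, mul_one, zsmul_eq_mul] at hk
    simp [hk]
  by_contra hm0
  exact ((hε.intCast_mul hm0).add_intCast k).ne_zero
    (eq_zero_of_map_mem_infinitesimals hι (ha' ▸ ha))

end Infinitesimals

open OMin Set in
theorem statement_18_general {R : Type*} [Field R] [LinearOrder R] [IsStrictOrderedRing R] [TopologicalSpace R] [OrderTopology R]
    (ι : ℝ →+* R) (hι : StrictMono ι)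
    (hproper : ∃ r : R, r ∉ Set.range ι)
    (ε : ℝ) (hε : Irrational ε)
    (ρ : (R ⧸ AddSubgroup.zmultiples (1 : R)) ≃ₜ (R ⧸ AddSubgroup.zmultiples (1 : R)))
    (hρ : ∀ x : R ⧸ AddSubgroup.zmultiples (1 : R),
      ρ x - (x + (QuotientAddGroup.mk (ι ε) : R ⧸ AddSubgroup.zmultiples (1 : R))) ∈
        (fun t : R => (QuotientAddGroup.mk t : R ⧸ AddSubgroup.zmultiples (1 : R))) ''
          {t : R | ∀ z : ℤ, |z • t| < 1}) :
    ∃ π : (R ⧸ AddSubgroup.zmultiples (1 : R)) ≃ₜ (R ⧸ AddSubgroup.zmultiples (1 : R)),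
      ∀ x, π (x + (QuotientAddGroup.mk (ι ε) : R ⧸ AddSubgroup.zmultiples (1 : R))) =
        ρ (π x) := by
  obtain ⟨δ, hδ, hδ0⟩ := exists_mem_infinitesimals_ne_zero hι hproper
  have hopen : IsOpen
      ((infinitesimals R).map (QuotientAddGroup.mk' (AddSubgroup.zmultiples (1 : R))) :
        Set (R ⧸ AddSubgroup.zmultiples (1 : R))) := by
    rw [AddSubgroup.coe_map]
    exact QuotientAddGroup.isOpenMap_coe _ (isOpen_infinitesimals hδ hδ0)
  exact exists_homeomorph_semiconj_add_of_sub_mem hopen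
    (fun _ => eq_zero_of_zsmul_mk_mem_map_infinitesimals hι.monotone hε) ρ hρ

open OMin Set in
/-- structural stability of irrational rotations of `S¹_R = R/ℤ` over a real
closed field `R` properly containing `ℝ`: every homeomorphism `ρ` of `R/ℤ` that differs
from the rotation `ρ_ε` by infinitesimals (elements of `A = {t : ∀ n ∈ ℤ, |nt| < 1}`) is
topologically conjugate to `ρ_ε` via a (not necessarily definable) homeomorphism `π`. -/
theorem statement_18 {R : Type*} [Field R] [LinearOrder R] [IsStrictOrderedRing R] [TopologicalSpace R] [OrderTopology R]
    (hR : OMin.IsRealClosed R) (ι : ℝ →+* R) (hι : StrictMono ι)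
    (hproper : ∃ r : R, r ∉ Set.range ι)
    (ε : ℝ) (hε : Irrational ε)
    (ρ : (R ⧸ AddSubgroup.zmultiples (1 : R)) ≃ₜ (R ⧸ AddSubgroup.zmultiples (1 : R)))
    (hρ : ∀ x : R ⧸ AddSubgroup.zmultiples (1 : R),
      ρ x - (x + (QuotientAddGroup.mk (ι ε) : R ⧸ AddSubgroup.zmultiples (1 : R))) ∈
        (fun t : R => (QuotientAddGroup.mk t : R ⧸ AddSubgroup.zmultiples (1 : R))) ''
          {t : R | ∀ z : ℤ, |z • t| < 1}) :
    ∃ π : (R ⧸ AddSubgroup.zmultiples (1 : R)) ≃ₜ (R ⧸ AddSubgroup.zmultiples (1 : R)),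
      ∀ x, π (x + (QuotientAddGroup.mk (ι ε) : R ⧸ AddSubgroup.zmultiples (1 : R))) =
        ρ (π x) :=
  statement_18_general ι hι hproper ε hε ρ hρ
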